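/- arXiv:2108.07406 — 6 statements merged into one kernel-verified Lean document; each statement's English description precedes it below -/
import Mathlib

section
/- Let f : ℝⁿ → ℝ be continuous and convex on the closed ball of radius ε > 0 centered at p (that is, the restriction of f to B̄(p, ε) is a convex function on that convex set). Let κ : ℝⁿ → ℝ be a nonnegative integrable function with ∫ κ = 1 whose support is contained in the closed ball B̄(0, ε/2). Then the convolution x ↦ ∫_{ℝⁿ} f(x + u)·κ(u) du is convex on the closed ball B̄(p, ε/2). -/
/-!
For every point `u` of the support of `κ`, the translate `x ↦ f (x + u)` is convex on
`B̄(p, ε/2)`, because `B̄(p, ε/2) + u ⊆ B̄(p, ε)`. The convolution is the average of these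
translates with the nonnegative weights `κ u`, and a nonnegative average of convex functions is
convex since the integral is monotone and linear.
-/

open MeasureTheory Set Metric Function

theorem convexOn_integral {α E : Type*} [MeasurableSpace α] {μ : Measure α} [AddCommGroup E]
    [Module ℝ E] {s : Set E} {g : E → α → ℝ} (hs : Convex ℝ s)
    (hg : ∀ᵐ u ∂μ, ConvexOn ℝ s (g · u)) (hint : ∀ x ∈ s, Integrable (g x) μ) :
    ConvexOn ℝ s (fun x => ∫ u, g x u ∂μ) := by
  refine ⟨hs, fun x hx y hy a b ha hb hab => ?_⟩
  have hxa := (hint x hx).const_mul a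
  have hyb := (hint y hy).const_mul b
  calc ∫ u, g (a • x + b • y) u ∂μ
      ≤ ∫ u, (a * g x u + b * g y u) ∂μ :=
        integral_mono_ae (hint _ (hs hx hy ha hb hab)) (hxa.add hyb)
          (hg.mono fun u hu => hu.2 hx hy ha hb hab)
    _ = a • ∫ u, g x u ∂μ + b • ∫ u, g y u ∂μ := by
        rw [integral_add hxa hyb, integral_const_mul, integral_const_mul, smul_eq_mul,
          smul_eq_mul]

theorem ConvexOn.integral_comp_add_mul {E : Type*} [AddCommGroup E] [Module ℝ E]
    [MeasurableSpace E] {μ : Measure E} {s t : Set E} {f κ : E → ℝ} (hf : ConvexOn ℝ s f)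
    (ht : Convex ℝ t) (hκ : ∀ u, 0 ≤ κ u) (hts : ∀ u ∈ support κ, ∀ x ∈ t, x + u ∈ s)
    (hint : ∀ x ∈ t, Integrable (fun u => f (x + u) * κ u) μ) :
    ConvexOn ℝ t (fun x => ∫ u, f (x + u) * κ u ∂μ) := by
  refine convexOn_integral ht (ae_of_all _ fun u => ?_) hint
  by_cases hu : κ u = 0
  · simpa [hu] using convexOn_const (0 : ℝ) ht
  · have htrans : ConvexOn ℝ t (fun x => f (x + u)) :=
      (hf.translate_left u).subset (fun x hx => by simpa [add_comm] using hts u (mem_support.2 hu) x hx) ht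
    simpa [mul_comm] using htrans.smul (hκ u)

theorem Integrable.continuousOn_mul_of_support_subset {X : Type*} [TopologicalSpace X]
    [T2Space X] [MeasurableSpace X] [OpensMeasurableSpace X] {μ : Measure X} {g κ : X → ℝ}
    {K : Set X} (hK : IsCompact K) (hg : ContinuousOn g K) (hκ : Integrable κ μ)
    (hsupp : support κ ⊆ K) :
    Integrable (fun u => g u * κ u) μ :=
  (integrableOn_iff_integrable_of_support_subset
    ((support_mul_subset_right _ _).trans hsupp)).1
    (hκ.integrableOn.continuousOn_mul hg hK)

theorem add_mem_closedBall_add {E : Type*} [SeminormedAddCommGroup E] {p x u : E} {r s : ℝ}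
    (hx : x ∈ closedBall p r) (hu : u ∈ closedBall 0 s) : x + u ∈ closedBall p (r + s) := by
  rw [mem_closedBall, dist_eq_norm] at hx ⊢
  rw [mem_closedBall_zero_iff] at hu
  calc ‖x + u - p‖ = ‖(x - p) + u‖ := by rw [sub_add_eq_add_sub, add_sub_right_comm]
    _ ≤ r + s := (norm_add_le _ _).trans (add_le_add hx hu)

theorem gw_convolution_convexity_preserving_general
    (n : ℕ) (ε : ℝ)
    (p : EuclideanSpace ℝ (Fin n))
    (f : EuclideanSpace ℝ (Fin n) → ℝ) (hf_cont : Continuous f)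
    (hf_conv : ConvexOn ℝ (Metric.closedBall p ε) f)
    (κ : EuclideanSpace ℝ (Fin n) → ℝ)
    (hκ_nonneg : ∀ u, 0 ≤ κ u)
    (hκ_int : Integrable κ)
    (hκ_supp : Function.support κ ⊆ Metric.closedBall 0 (ε / 2)) :
    ConvexOn ℝ (Metric.closedBall p (ε / 2)) (fun x => ∫ u, f (x + u) * κ u) := by
  have hball : ∀ u ∈ support κ, ∀ x ∈ closedBall p (ε / 2), x + u ∈ closedBall p ε :=
    fun u hu x hx => by simpa using add_mem_closedBall_add hx (hκ_supp hu)
  refine hf_conv.integral_comp_add_mul (convex_closedBall p _) hκ_nonneg hball fun x _ => ?_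
  exact Integrable.continuousOn_mul_of_support_subset (isCompact_closedBall 0 (ε / 2))
    (hf_cont.comp (continuous_const_add x)).continuousOn hκ_int hκ_supp

/-- Convolving a function that is convex on the closed ball of radius `ε`
around `p` with a probability kernel supported in the closed ball of radius `ε/2` yields a
function that is convex on the closed ball of radius `ε/2` around `p`. -/
theorem gw_convolution_convexity_preserving
    (n : ℕ) (hn : 1 ≤ n) (ε : ℝ) (hε : 0 < ε)
    (p : EuclideanSpace ℝ (Fin n))
    (f : EuclideanSpace ℝ (Fin n) → ℝ) (hf_cont : Continuous f)
    (hf_conv : ConvexOn ℝ (Metric.closedBall p ε) f)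
    (κ : EuclideanSpace ℝ (Fin n) → ℝ)
    (hκ_nonneg : ∀ u, 0 ≤ κ u)
    (hκ_int : Integrable κ)
    (hκ_mass : ∫ u, κ u = 1)
    (hκ_supp : Function.support κ ⊆ Metric.closedBall 0 (ε / 2)) :
    ConvexOn ℝ (Metric.closedBall p (ε / 2)) (fun x => ∫ u, f (x + u) * κ u) :=
  gw_convolution_convexity_preserving_general n ε p f hf_cont hf_conv κ hκ_nonneg hκ_int hκ_supp
end

section
/- Let n ≥ 1, α > 0, μ > 0, L ≥ 0, and let f : ℝⁿ → ℝ be L-smooth. Then for every p ∈ ℝⁿ, ‖∇f(p) − (n/(μα²)) • ∫ f(p + μ•v) • v dσ_α(v)‖ ≤ L·n·α·μ/2, where the integral is over v drawn from the uniform probability measure σ_α on the origin-centered sphere of radius α. -/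
open MeasureTheory RealInnerProductSpace Module Metric

/-!
Write `f (p + μ • v) = f p + μ ⟪∇f p, v⟫ + r v`, where `|r v| ≤ L μ² ‖v‖² / 2` by `L`-smoothness.
Integrated against `v dσ`, the constant term vanishes since `σ` is symmetric. Rotation invariance
makes `∫ ⟪u, v⟫² dσ` depend only on `‖u‖`, and summing over an orthonormal basis gives
`n ∫ ⟪u, v⟫² dσ = α² ‖u‖²`; by polarization `n ∫ ⟪g, v⟫ v dσ = α² g`, so the linear term
contributes exactly `μ α² ∇f p / n`. The error is `(n / (μ α²)) ∫ r v • v dσ`, of norm at most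
`(n / (μ α²)) (L μ² α² / 2) α`.
-/

section LSmooth

variable {F : Type*} [NormedAddCommGroup F] [InnerProductSpace ℝ F] [CompleteSpace F]
  {f : F → ℝ} {L : ℝ}

theorem abs_sub_sub_inner_gradient_le (hf : Differentiable ℝ f)
    (hL : ∀ x y, ‖gradient f x - gradient f y‖ ≤ L * ‖x - y‖) (x h : F) :
    |f (x + h) - f x - ⟪gradient f x, h⟫| ≤ L / 2 * ‖h‖ ^ 2 := by
  set g : ℝ → ℝ := fun t ↦ f (x + t • h) - f x - t * ⟪gradient f x, h⟫
  have hg : ∀ t, HasDerivAt g (⟪gradient f (x + t • h) - gradient f x, h⟫) t := by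
    intro t
    have hline : HasDerivAt (fun t : ℝ ↦ x + t • h) h t := by
      simpa using ((hasDerivAt_id t).smul_const h).const_add x
    have := ((hasGradientAt_iff_hasFDerivAt.mp (hf _).hasGradientAt).comp_hasDerivAt t hline
      |>.sub_const (f x)).sub (hasDerivAt_mul_const ⟪gradient f x, h⟫)
    exact this.congr_deriv (by rw [inner_sub_left]; rfl)
  have hB : ∀ t, HasDerivAt (fun t ↦ L / 2 * ‖h‖ ^ 2 * t ^ 2) (L * ‖h‖ ^ 2 * t) t := fun t ↦
    ((hasDerivAt_pow 2 t).const_mul (L / 2 * ‖h‖ ^ 2)).congr_deriv (by norm_num; ring)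
  have hg'_le : ∀ t ∈ Set.Ico (0 : ℝ) 1,
      ‖⟪gradient f (x + t • h) - gradient f x, h⟫‖ ≤ L * ‖h‖ ^ 2 * t := fun t ht ↦
    calc ‖⟪gradient f (x + t • h) - gradient f x, h⟫‖
        ≤ ‖gradient f (x + t • h) - gradient f x‖ * ‖h‖ := norm_inner_le_norm _ _
      _ ≤ L * ‖t • h‖ * ‖h‖ := by gcongr; simpa using hL (x + t • h) x
      _ = L * ‖h‖ ^ 2 * t := by rw [norm_smul, Real.norm_of_nonneg ht.1]; ring
  have := image_norm_le_of_norm_deriv_right_le_deriv_boundary (a := 0) (b := 1)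
    (fun t _ ↦ (hg t).continuousAt.continuousWithinAt) (fun t _ ↦ (hg t).hasDerivWithinAt)
    (by simp [g]) hB hg'_le (Set.right_mem_Icc.mpr zero_le_one)
  simpa [g] using this

theorem norm_integral_sub_sub_inner_gradient_smul_le [MeasurableSpace F] {σ : Measure F}
    [IsProbabilityMeasure σ] {α : ℝ} (hσ : ∀ᵐ v ∂σ, ‖v‖ = α) (hf : Differentiable ℝ f)
    (hL : ∀ x y, ‖gradient f x - gradient f y‖ ≤ L * ‖x - y‖) (p : F) (μ : ℝ) :
    ‖∫ v, (f (p + μ • v) - f p - μ * ⟪gradient f p, v⟫) • v ∂σ‖ ≤ L / 2 * μ ^ 2 * α ^ 3 := by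
  have hbound : ∀ᵐ v ∂σ,
      ‖(f (p + μ • v) - f p - μ * ⟪gradient f p, v⟫) • v‖ ≤ L / 2 * μ ^ 2 * α ^ 3 := by
    filter_upwards [hσ] with v hv
    have := abs_sub_sub_inner_gradient_le hf hL p (μ • v)
    rw [real_inner_smul_right, norm_smul, hv, Real.norm_eq_abs, mul_pow, sq_abs] at this
    rw [norm_smul, Real.norm_eq_abs, hv]
    calc _ ≤ L / 2 * (μ ^ 2 * α ^ 2) * α := by gcongr; exact hv ▸ norm_nonneg v
      _ = L / 2 * μ ^ 2 * α ^ 3 := by ring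
  simpa using norm_integral_le_of_norm_le_const hbound

end LSmooth

section SphereMeasure

variable {E : Type*} [NormedAddCommGroup E] [InnerProductSpace ℝ E] [MeasurableSpace E]
  [BorelSpace E] {σ : Measure E} {α : ℝ}

theorem integral_comp_linearIsometryEquiv_of_map_eq {G : Type*} [NormedAddCommGroup G]
    [NormedSpace ℝ G] (R : E ≃ₗᵢ[ℝ] E) (hR : σ.map R = σ) (φ : E → G) :
    ∫ v, φ (R v) ∂σ = ∫ v, φ v ∂σ := by
  conv_rhs => rw [← hR]
  exact (integral_map_equiv R.toHomeomorph.toMeasurableEquiv φ).symm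

theorem integral_id_eq_zero_of_map_neg_eq (hσ : σ.map (LinearIsometryEquiv.neg ℝ) = σ) :
    ∫ v, v ∂σ = 0 := by
  have := integral_comp_linearIsometryEquiv_of_map_eq _ hσ id
  simp only [LinearIsometryEquiv.coe_neg, id] at this
  rw [integral_neg] at this
  linear_combination (norm := module) (-(1 / 2) : ℝ) • this

theorem integral_inner_sq_eq_of_norm_eq (hσ_rot : ∀ R : E ≃ₗᵢ[ℝ] E, σ.map R = σ)
    {u w : E} (h : ‖u‖ = ‖w‖) :
    ∫ v, ⟪u, v⟫ ^ 2 ∂σ = ∫ v, ⟪w, v⟫ ^ 2 ∂σ := by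
  set R := Submodule.reflection (ℝ ∙ (u - w))ᗮ
  rw [← Submodule.reflection_sub h,
    ← integral_comp_linearIsometryEquiv_of_map_eq R (hσ_rot R) fun v ↦ ⟪R u, v⟫ ^ 2]
  simp only [LinearIsometryEquiv.inner_map_map]

variable [FiniteDimensional ℝ E]

theorem Continuous.integrable_of_ae_norm_eq [IsFiniteMeasure σ] (hσ : ∀ᵐ v ∂σ, ‖v‖ = α)
    {G : Type*} [NormedAddCommGroup G] {φ : E → G} (hφ : Continuous φ) : Integrable φ σ := by
  have hmem : ∀ᵐ v ∂σ, v ∈ sphere (0 : E) α := by simpa using hσ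
  have := hφ.continuousOn.integrableOn_compact (μ := σ) (isCompact_sphere (0 : E) α)
  rwa [IntegrableOn, Measure.restrict_eq_self_of_ae_mem hmem] at this

theorem finrank_mul_integral_inner_sq [IsProbabilityMeasure σ] (hσ_sphere : ∀ᵐ v ∂σ, ‖v‖ = α)
    (hσ_rot : ∀ R : E ≃ₗᵢ[ℝ] E, σ.map R = σ) (u : E) :
    finrank ℝ E * ∫ v, ⟪u, v⟫ ^ 2 ∂σ = α ^ 2 * ‖u‖ ^ 2 := by
  set b := stdOrthonormalBasis ℝ E
  have hb : ∀ i, ∫ v, ⟪u, v⟫ ^ 2 ∂σ = ‖u‖ ^ 2 * ∫ v, ⟪b i, v⟫ ^ 2 ∂σ := fun i ↦ by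
    have : ‖u‖ = ‖‖u‖ • b i‖ := by simp [norm_smul, b.orthonormal.1 i]
    simp_rw [integral_inner_sq_eq_of_norm_eq hσ_rot this, real_inner_smul_left,
      mul_pow, integral_const_mul]
  have hint : ∀ i, Integrable (fun v ↦ ⟪b i, v⟫ ^ 2) σ := fun i ↦
    (by fun_prop : Continuous fun v ↦ ⟪b i, v⟫ ^ 2).integrable_of_ae_norm_eq hσ_sphere
  calc finrank ℝ E * ∫ v, ⟪u, v⟫ ^ 2 ∂σ = ∑ i, ‖u‖ ^ 2 * ∫ v, ⟪b i, v⟫ ^ 2 ∂σ := by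
        simp [← hb, b]
    _ = ‖u‖ ^ 2 * ∫ v, ‖v‖ ^ 2 ∂σ := by
        rw [← Finset.mul_sum, ← integral_finsetSum _ fun i _ ↦ hint i]
        simp_rw [b.sum_sq_inner_right]
    _ = α ^ 2 * ‖u‖ ^ 2 := by
        rw [integral_congr_ae (hσ_sphere.mono fun v hv ↦ by rw [hv]), integral_const]
        simp [mul_comm]

theorem finrank_smul_integral_inner_smul [IsProbabilityMeasure σ] (hσ_sphere : ∀ᵐ v ∂σ, ‖v‖ = α)
    (hσ_rot : ∀ R : E ≃ₗᵢ[ℝ] E, σ.map R = σ) (g : E) :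
    (finrank ℝ E : ℝ) • ∫ v, ⟪g, v⟫ • v ∂σ = α ^ 2 • g := by
  have hint : ∀ u : E, Integrable (fun v ↦ ⟪u, v⟫ ^ 2) σ := fun u ↦
    (by fun_prop : Continuous fun v ↦ ⟪u, v⟫ ^ 2).integrable_of_ae_norm_eq hσ_sphere
  have hpolar : ∀ w v : E, ⟪g, v⟫ * ⟪w, v⟫ =
      (⟪w + g, v⟫ ^ 2 - ⟪w, v⟫ ^ 2 - ⟪g, v⟫ ^ 2) / 2 := fun w v ↦ by
    rw [inner_add_left]; ring
  refine ext_inner_left ℝ fun w ↦ ?_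
  rw [inner_smul_right, ← integral_inner
    ((by fun_prop : Continuous fun v ↦ ⟪g, v⟫ • v).integrable_of_ae_norm_eq hσ_sphere)]
  simp_rw [real_inner_smul_right, hpolar, integral_div]
  have hint' : Integrable (fun v ↦ ⟪w + g, v⟫ ^ 2 - ⟪w, v⟫ ^ 2) σ := (hint _).sub (hint _)
  rw [integral_sub hint' (hint _), integral_sub (hint _) (hint _)]
  have hQ := finrank_mul_integral_inner_sq hσ_sphere hσ_rot
  linear_combination (hQ (w + g) - hQ w - hQ g) / 2 + α ^ 2 / 2 * norm_add_sq_real w g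

end SphereMeasure

theorem gw_gradient_estimation_one_point_general
    (n : ℕ) (α μ L : ℝ) (hα : 0 < α) (hμ : 0 < μ)
    (σ : Measure (EuclideanSpace ℝ (Fin n))) [IsProbabilityMeasure σ]
    (hσ_sphere : ∀ᵐ v ∂σ, ‖v‖ = α)
    (hσ_rot : ∀ R : EuclideanSpace ℝ (Fin n) ≃ₗᵢ[ℝ] EuclideanSpace ℝ (Fin n),
      Measure.map R σ = σ)
    (f : EuclideanSpace ℝ (Fin n) → ℝ)
    (hf_diff : Differentiable ℝ f)
    (hf_smooth : ∀ x y, ‖gradient f x - gradient f y‖ ≤ L * ‖x - y‖)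
    (p : EuclideanSpace ℝ (Fin n)) :
    ‖gradient f p - ((n : ℝ) / (μ * α ^ 2)) • ∫ v, f (p + μ • v) • v ∂σ‖
      ≤ L * n * α * μ / 2 := by
  set g := gradient f p
  set r := fun v ↦ f (p + μ • v) - f p - μ * ⟪g, v⟫
  have hint {φ : EuclideanSpace ℝ (Fin n) → EuclideanSpace ℝ (Fin n)} (hφ : Continuous φ) :
      Integrable φ σ := hφ.integrable_of_ae_norm_eq hσ_sphere
  have hf_cont := hf_diff.continuous
  have hsplit : ∫ v, f (p + μ • v) • v ∂σ =
      f p • ∫ v, v ∂σ + μ • ∫ v, ⟪g, v⟫ • v ∂σ + ∫ v, r v • v ∂σ := by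
    rw [← integral_smul, ← integral_smul, ← integral_add (hint (by fun_prop)) (hint (by fun_prop)),
      ← integral_add (hint (by fun_prop)) (hint (by fun_prop))]
    congr 1
    funext v
    simp only [r]
    module
  have hmoment : (n : ℝ) • ∫ v, ⟪g, v⟫ • v ∂σ = α ^ 2 • g := by
    simpa using finrank_smul_integral_inner_smul hσ_sphere hσ_rot g
  have hcancel : ((n : ℝ) / (μ * α ^ 2)) • μ • ∫ v, ⟪g, v⟫ • v ∂σ = g := by
    rw [smul_smul, show (n : ℝ) / (μ * α ^ 2) * μ = (α ^ 2)⁻¹ * n by field_simp, mul_smul,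
      hmoment, inv_smul_smul₀ (by positivity)]
  rw [hsplit, integral_id_eq_zero_of_map_neg_eq (hσ_rot _), smul_zero, zero_add, smul_add,
    hcancel, sub_add_cancel_left, norm_neg, norm_smul, Real.norm_of_nonneg (by positivity)]
  calc _ ≤ (n : ℝ) / (μ * α ^ 2) * (L / 2 * μ ^ 2 * α ^ 3) := by
        gcongr
        exact norm_integral_sub_sub_inner_gradient_smul_le hσ_sphere hf_diff hf_smooth p μ
    _ = L * n * α * μ / 2 := by field_simp

/-- For an `L`-smooth `f : ℝⁿ → ℝ`, the one-point zeroth-order gradient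
estimator satisfies `‖∇f(p) − (n/(μα²)) • ∫ f(p + μv) • v dσ(v)‖ ≤ Lnαμ/2`, where `σ` is
the uniform probability measure on the origin-centered sphere of radius `α`. -/
theorem gw_gradient_estimation_one_point
    (n : ℕ) (hn : 1 ≤ n) (α μ L : ℝ) (hα : 0 < α) (hμ : 0 < μ) (hL : 0 ≤ L)
    (σ : Measure (EuclideanSpace ℝ (Fin n))) [IsProbabilityMeasure σ]
    (hσ_sphere : ∀ᵐ v ∂σ, ‖v‖ = α)
    (hσ_rot : ∀ R : EuclideanSpace ℝ (Fin n) ≃ₗᵢ[ℝ] EuclideanSpace ℝ (Fin n),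
      Measure.map R σ = σ)
    (f : EuclideanSpace ℝ (Fin n) → ℝ)
    (hf_diff : Differentiable ℝ f)
    (hf_smooth : ∀ x y, ‖gradient f x - gradient f y‖ ≤ L * ‖x - y‖)
    (p : EuclideanSpace ℝ (Fin n)) :
    ‖gradient f p - ((n : ℝ) / (μ * α ^ 2)) • ∫ v, f (p + μ • v) • v ∂σ‖
      ≤ L * n * α * μ / 2 :=
  gw_gradient_estimation_one_point_general n α μ L hα hμ σ hσ_sphere hσ_rot f hf_diff hf_smooth p
end

section
/- Let n ≥ 1, α > 0, μ > 0, L ≥ 0, let f : ℝⁿ → ℝ be L-smooth, and let p ∈ ℝⁿ and v ∈ ℝⁿ with ‖v‖ = α. Then |⟨∇f(p), v⟩ − (1/(2μ)) ∫_{−μ}^{μ} ⟨∇f(p + t•v), v⟩ dt| ≤ L·α²·μ/2. -/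
/-!
Along the line `t ↦ p + t • v` the directional derivative `⟪∇f(p + t • v), v⟫` is
`L‖v‖²`-Lipschitz in `t`, so it deviates from its value at `t = 0` by at most `L‖v‖²|t|`.
Averaging this over `[-μ, μ]` gives the bound, since the average of `|t|` there is `μ / 2`.
-/

open MeasureTheory

theorem integral_abs_symm_eq_sq {μ : ℝ} (hμ : 0 ≤ μ) : ∫ t in (-μ)..μ, |t| = μ ^ 2 := by
  have hint (a b : ℝ) : IntervalIntegrable (fun t : ℝ => |t|) volume a b :=
    continuous_abs.intervalIntegrable a b
  have hleft : ∫ t in (-μ)..0, |t| = ∫ t in (-μ)..0, -t :=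
    intervalIntegral.integral_congr fun t ht => by
      rw [Set.uIcc_of_le (by linarith)] at ht
      exact abs_of_nonpos ht.2
  have hright : ∫ t in (0 : ℝ)..μ, |t| = ∫ t in (0 : ℝ)..μ, t :=
    intervalIntegral.integral_congr fun t ht => by
      rw [Set.uIcc_of_le hμ] at ht
      exact abs_of_nonneg ht.1
  rw [← intervalIntegral.integral_add_adjacent_intervals (hint (-μ) 0) (hint 0 μ), hleft,
    hright, intervalIntegral.integral_neg, integral_id, integral_id]
  ring

theorem abs_sub_symm_average_le {φ : ℝ → ℝ} {c μ K : ℝ} (hμ : 0 < μ)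
    (hφ : IntervalIntegrable φ volume (-μ) μ)
    (hdev : ∀ t ∈ Set.Icc (-μ) μ, |c - φ t| ≤ K * |t|) :
    |c - (1 / (2 * μ)) * ∫ t in (-μ)..μ, φ t| ≤ K * μ / 2 := by
  have hle : -μ ≤ μ := by linarith
  have hdev_int : IntervalIntegrable (fun t => c - φ t) volume (-μ) μ :=
    intervalIntegrable_const.sub hφ
  have hsub : c - (1 / (2 * μ)) * ∫ t in (-μ)..μ, φ t =
      (1 / (2 * μ)) * ∫ t in (-μ)..μ, (c - φ t) := by
    rw [intervalIntegral.integral_sub intervalIntegrable_const hφ,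
      intervalIntegral.integral_const, smul_eq_mul]
    field_simp
    ring
  have hbound : |∫ t in (-μ)..μ, (c - φ t)| ≤ K * μ ^ 2 :=
    calc |∫ t in (-μ)..μ, (c - φ t)|
        ≤ ∫ t in (-μ)..μ, |c - φ t| :=
          intervalIntegral.abs_integral_le_integral_abs hle
      _ ≤ ∫ t in (-μ)..μ, K * |t| :=
          intervalIntegral.integral_mono_on hle hdev_int.abs
            ((continuous_const.mul continuous_abs).intervalIntegrable _ _) hdev
      _ = K * μ ^ 2 := by
          rw [intervalIntegral.integral_const_mul, integral_abs_symm_eq_sq hμ.le]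
  calc |c - (1 / (2 * μ)) * ∫ t in (-μ)..μ, φ t|
      = (1 / (2 * μ)) * |∫ t in (-μ)..μ, (c - φ t)| := by
        rw [hsub, abs_mul, abs_of_pos (by positivity)]
    _ ≤ (1 / (2 * μ)) * (K * μ ^ 2) := by gcongr
    _ = K * μ / 2 := by field_simp

theorem abs_inner_sub_inner_add_smul_le {E : Type*} [NormedAddCommGroup E]
    [InnerProductSpace ℝ E] {g : E → E} {L : ℝ} (hg : ∀ x y, ‖g x - g y‖ ≤ L * ‖x - y‖)
    (p v : E) (t : ℝ) :
    |(inner ℝ (g p) v : ℝ) - inner ℝ (g (p + t • v)) v| ≤ L * ‖v‖ ^ 2 * |t| :=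
  calc |(inner ℝ (g p) v : ℝ) - inner ℝ (g (p + t • v)) v|
      = |(inner ℝ (g p - g (p + t • v)) v : ℝ)| := by rw [inner_sub_left]
    _ ≤ ‖g p - g (p + t • v)‖ * ‖v‖ := abs_real_inner_le_norm _ _
    _ ≤ L * ‖p - (p + t • v)‖ * ‖v‖ := by gcongr; exact hg _ _
    _ = L * ‖v‖ ^ 2 * |t| := by
        rw [sub_add_cancel_left, norm_neg, norm_smul, Real.norm_eq_abs]
        ring

theorem gw_directional_average_error_general
    (n : ℕ) (α μ L : ℝ) (hμ : 0 < μ)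
    (f : EuclideanSpace ℝ (Fin n) → ℝ)
    (hf_smooth : ∀ x y, ‖gradient f x - gradient f y‖ ≤ L * ‖x - y‖)
    (p v : EuclideanSpace ℝ (Fin n)) (hv : ‖v‖ = α) :
    |(inner ℝ (gradient f p) v : ℝ) -
        (1 / (2 * μ)) * ∫ t in (-μ)..μ, (inner ℝ (gradient f (p + t • v)) v : ℝ)|
      ≤ L * α ^ 2 * μ / 2 := by
  have hlip : LipschitzWith (Real.toNNReal L) (gradient f) :=
    LipschitzWith.of_dist_le' fun x y => by simpa only [dist_eq_norm] using hf_smooth x y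
  have hcont : Continuous fun t : ℝ => (inner ℝ (gradient f (p + t • v)) v : ℝ) :=
    (hlip.continuous.comp (continuous_const.add (continuous_id.smul continuous_const))).inner
      continuous_const
  rw [← hv]
  exact abs_sub_symm_average_le hμ (hcont.intervalIntegrable _ _)
    fun t _ => abs_inner_sub_inner_add_smul_le hf_smooth p v t

/-- For an `L`-smooth `f : ℝⁿ → ℝ` and `‖v‖ = α`, the directional
derivative at `p` differs from its average along the segment from `p − μv` to `p + μv`
by at most `Lα²μ/2`. -/
theorem gw_directional_average_error
    (n : ℕ) (hn : 1 ≤ n) (α μ L : ℝ) (hα : 0 < α) (hμ : 0 < μ) (hL : 0 ≤ L)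
    (f : EuclideanSpace ℝ (Fin n) → ℝ)
    (hf_diff : Differentiable ℝ f)
    (hf_smooth : ∀ x y, ‖gradient f x - gradient f y‖ ≤ L * ‖x - y‖)
    (p v : EuclideanSpace ℝ (Fin n)) (hv : ‖v‖ = α) :
    |(inner ℝ (gradient f p) v : ℝ) -
        (1 / (2 * μ)) * ∫ t in (-μ)..μ, (inner ℝ (gradient f (p + t • v)) v : ℝ)|
      ≤ L * α ^ 2 * μ / 2 :=
  gw_directional_average_error_general n α μ L hμ f hf_smooth p v hv
end

section
/- Let n ≥ 1, μ > 0, let f : ℝⁿ → ℝ be twice continuously differentiable, and fix v, u ∈ ℝⁿ. Define the directional smoothing g(x) = (1/(2μ)) ∫_{−μ}^{μ} f(x + t•v) dt. Then for every p ∈ ℝⁿ, the function λ ↦ g(p + λ•u) is twice differentiable at λ = 0 and its second derivative there equals (1/(2μ)) ∫_{−μ}^{μ} D²f(p + t•v)[u, u] dt, where D²f(q)[u,u] denotes the second directional derivative of f at q along u (the second derivative at 0 of λ ↦ f(q + λ•u)). -/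
open Metric

/-!
Along the line `λ ↦ p + λ • u` the smoothing is `λ ↦ (1/(2μ)) ∫_{−μ}^{μ} f(p + t•v + λ•u) dt`.
Since `f` is `C¹`, the `λ`-derivative of the integrand is continuous in `(t, λ)`, hence bounded on
`[−μ, μ] × closedBall λ₀ 1`, so we may differentiate under the integral sign; the result is the same
kind of integral for the directional derivative `y ↦ Df(y)[u]`, which is again `C¹` because `f` is
`C²`. Differentiating a second time gives the formula.
-/

section

variable {E F : Type*} [NormedAddCommGroup E] [NormedSpace ℝ E]
  [NormedAddCommGroup F] [NormedSpace ℝ F]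

theorem hasDerivAt_comp_add_smul {f : E → F} (hf : Differentiable ℝ f) (q u : E) (lam : ℝ) :
    HasDerivAt (fun x : ℝ => f (q + x • u)) (fderiv ℝ f (q + lam • u) u) lam := by
  have h := (hf _).hasFDerivAt.comp_hasDerivAt lam (((hasDerivAt_id lam).smul_const u).const_add q)
  simp only [one_smul, id] at h
  exact h

theorem deriv_comp_add_smul {f : E → F} (hf : Differentiable ℝ f) (q u : E) :
    deriv (fun x : ℝ => f (q + x • u)) = fun lam => fderiv ℝ f (q + lam • u) u :=
  funext fun lam => (hasDerivAt_comp_add_smul hf q u lam).deriv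

theorem iteratedDeriv_two_comp_add_smul {f : E → F} (hf : ContDiff ℝ 2 f) (q u : E) (lam : ℝ) :
    iteratedDeriv 2 (fun x : ℝ => f (q + x • u)) lam
      = fderiv ℝ (fun y => fderiv ℝ f y u) (q + lam • u) u := by
  have hf₁ : Differentiable ℝ fun y => fderiv ℝ f y u :=
    ((ContinuousLinearMap.apply ℝ F u).contDiff.comp
      (hf.fderiv_right le_rfl)).differentiable one_ne_zero
  rw [iteratedDeriv_succ, iteratedDeriv_one, deriv_comp_add_smul (hf.differentiable two_ne_zero),
    (hasDerivAt_comp_add_smul hf₁ q u lam).deriv]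

theorem hasDerivAt_intervalIntegral_comp_add_smul [CompleteSpace F] {f : E → F}
    (hf : ContDiff ℝ 1 f) (p v u : E) (a b lam₀ : ℝ) :
    HasDerivAt (fun lam : ℝ => ∫ t in a..b, f (p + t • v + lam • u))
      (∫ t in a..b, fderiv ℝ f (p + t • v + lam₀ • u) u) lam₀ := by
  have hDf : Continuous fun y => fderiv ℝ f y u :=
    (ContinuousLinearMap.apply ℝ F u).continuous.comp (hf.continuous_fderiv one_ne_zero)
  have hK : IsCompact ((fun q : ℝ × ℝ => p + q.1 • v + q.2 • u) ''
      (Set.uIcc a b ×ˢ closedBall lam₀ 1)) :=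
    (isCompact_uIcc.prod (isCompact_closedBall _ _)).image (by fun_prop)
  obtain ⟨C, hC⟩ := hK.exists_bound_of_continuousOn hDf.continuousOn
  refine (intervalIntegral.hasDerivAt_integral_of_dominated_loc_of_deriv_le
    (F := fun lam t => f (p + t • v + lam • u))
    (F' := fun lam t => fderiv ℝ f (p + t • v + lam • u) u)
    (bound := fun _ => C)
    (ball_mem_nhds lam₀ one_pos)
    (.of_forall fun _ => (hf.continuous.comp (by fun_prop)).aestronglyMeasurable)
    ((hf.continuous.comp (by fun_prop)).intervalIntegrable _ _)
    (hDf.comp (by fun_prop)).aestronglyMeasurable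
    (.of_forall fun t ht lam hlam =>
      hC _ ⟨(t, lam), ⟨Set.uIoc_subset_uIcc ht, ball_subset_closedBall hlam⟩, rfl⟩)
    intervalIntegrable_const
    (.of_forall fun t _ lam _ =>
      hasDerivAt_comp_add_smul (hf.differentiable one_ne_zero) _ u lam)).2

end

theorem gw_directional_smoothing_second_deriv_general
    (n : ℕ) (μ : ℝ)
    (f : EuclideanSpace ℝ (Fin n) → ℝ) (hf : ContDiff ℝ 2 f)
    (v u : EuclideanSpace ℝ (Fin n))
    (g : EuclideanSpace ℝ (Fin n) → ℝ)
    (hg : ∀ x, g x = (1 / (2 * μ)) * ∫ t in (-μ)..μ, f (x + t • v))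
    (p : EuclideanSpace ℝ (Fin n)) :
    DifferentiableAt ℝ (fun lam : ℝ => g (p + lam • u)) 0 ∧
    DifferentiableAt ℝ (deriv fun lam : ℝ => g (p + lam • u)) 0 ∧
    iteratedDeriv 2 (fun lam : ℝ => g (p + lam • u)) 0
      = (1 / (2 * μ)) *
          ∫ t in (-μ)..μ, iteratedDeriv 2 (fun lam : ℝ => f (p + t • v + lam • u)) 0 := by
  set Df : EuclideanSpace ℝ (Fin n) → ℝ := fun y => fderiv ℝ f y u
  have hDf : ContDiff ℝ 1 Df :=
    (ContinuousLinearMap.apply ℝ ℝ u).contDiff.comp (hf.fderiv_right le_rfl)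
  have hline : (fun lam : ℝ => g (p + lam • u))
      = fun lam => (1 / (2 * μ)) * ∫ t in (-μ)..μ, f (p + t • v + lam • u) := by
    funext lam
    simp only [hg, add_right_comm p]
  have hd1 : ∀ lam : ℝ, HasDerivAt (fun x : ℝ => g (p + x • u))
      ((1 / (2 * μ)) * ∫ t in (-μ)..μ, Df (p + t • v + lam • u)) lam := fun lam => by
    rw [hline]
    exact (hasDerivAt_intervalIntegral_comp_add_smul (hf.of_le one_le_two) ..).const_mul _
  have hd2 : HasDerivAt (deriv fun lam : ℝ => g (p + lam • u))
      ((1 / (2 * μ)) * ∫ t in (-μ)..μ, fderiv ℝ Df (p + t • v + (0 : ℝ) • u) u) 0 := by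
    rw [funext fun lam => (hd1 lam).deriv]
    exact (hasDerivAt_intervalIntegral_comp_add_smul hDf p v u _ _ 0).const_mul _
  refine ⟨(hd1 0).differentiableAt, hd2.differentiableAt, ?_⟩
  rw [iteratedDeriv_succ, iteratedDeriv_one, hd2.deriv]
  simp only [iteratedDeriv_two_comp_add_smul hf, Df]

/-- For `f : ℝⁿ → ℝ` twice continuously differentiable and the directional
Greene–Wu smoothing `g(x) = (1/(2μ)) ∫_{−μ}^{μ} f(x + t•v) dt`, the map `λ ↦ g(p + λ•u)` is
twice differentiable at `0`, with second derivative there equal to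
`(1/(2μ)) ∫_{−μ}^{μ} D²f(p + t•v)[u, u] dt`, where `D²f(q)[u,u]` is the second derivative
at `0` of `λ ↦ f(q + λ•u)`. -/
theorem gw_directional_smoothing_second_deriv
    (n : ℕ) (hn : 1 ≤ n) (μ : ℝ) (hμ : 0 < μ)
    (f : EuclideanSpace ℝ (Fin n) → ℝ) (hf : ContDiff ℝ 2 f)
    (v u : EuclideanSpace ℝ (Fin n))
    (g : EuclideanSpace ℝ (Fin n) → ℝ)
    (hg : ∀ x, g x = (1 / (2 * μ)) * ∫ t in (-μ)..μ, f (x + t • v))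
    (p : EuclideanSpace ℝ (Fin n)) :
    DifferentiableAt ℝ (fun lam : ℝ => g (p + lam • u)) 0 ∧
    DifferentiableAt ℝ (deriv fun lam : ℝ => g (p + lam • u)) 0 ∧
    iteratedDeriv 2 (fun lam : ℝ => g (p + lam • u)) 0
      = (1 / (2 * μ)) *
          ∫ t in (-μ)..μ, iteratedDeriv 2 (fun lam : ℝ => f (p + t • v + lam • u)) 0 :=
  gw_directional_smoothing_second_deriv_general n μ f hf v u g hg p
end

section
/- Let n ≥ 1, μ > 0, and let f : ℝⁿ → ℝ be smooth (infinitely differentiable). Define the Greene–Wu smoothing f̂(x) = ∫ (1/(2μ)) ∫_{−μ}^{μ} f(x + t•v) dt dσ₁(v), where σ₁ is the uniform probability measure on the unit sphere of ℝⁿ. Then for every p ∈ ℝⁿ and every unit vector u, the second directional derivative satisfies D²f̂(p)[u, u] ≥ ∫ (1/(2μ)) ∫_{−μ}^{μ} (inf over unit vectors w of D²f(p + t•v)[w, w]) dt dσ₁(v), where D²h(q)[u,u] denotes the second derivative at 0 of λ ↦ h(q + λ•u). In particular the smallest eigenvalue of the Hessian of f̂ at p is bounded below by the averaged smallest Hessian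 eigenvalue of f along the smoothing region. -/
open MeasureTheory Metric Set

section GWaux

variable {E : Type*} [NormedAddCommGroup E] [NormedSpace ℝ E]

lemma gw_hasDerivAt_line (f : E → ℝ) (hf : Differentiable ℝ f) (a u : E) (lam : ℝ) :
    HasDerivAt (fun s : ℝ => f (a + s • u)) ((fderiv ℝ f (a + lam • u)) u) lam := by
  have h1 : HasDerivAt (fun s : ℝ => a + s • u) u lam := by
    simpa using ((hasDerivAt_id lam).smul_const u).const_add a
  exact (hf (a + lam • u)).hasFDerivAt.comp_hasDerivAt lam h1

lemma gw_hasDerivAt_line2 (f : E → ℝ) (hf : ContDiff ℝ (⊤ : ℕ∞) f) (a u : E) (lam : ℝ) :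
    HasDerivAt (fun s : ℝ => (fderiv ℝ f (a + s • u)) u)
      (((fderiv ℝ (fderiv ℝ f) (a + lam • u)) u) u) lam := by
  have hdf : Differentiable ℝ (fderiv ℝ f) :=
    (hf.fderiv_right (m := (⊤ : ℕ∞)) (by simp)).differentiable (by simp)
  have h1 : HasDerivAt (fun s : ℝ => a + s • u) u lam := by
    simpa using ((hasDerivAt_id lam).smul_const u).const_add a
  have h2 : HasFDerivAt (fun x : E => (fderiv ℝ f x) u)
      (((fderiv ℝ (fderiv ℝ f) (a + lam • u)).flip) u) (a + lam • u) := by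
    exact (hdf (a + lam • u)).hasFDerivAt.clm_apply (hasFDerivAt_const u _) |>.congr_fderiv (by
      ext d
      simp)
  exact h2.comp_hasDerivAt lam h1

lemma gw_secondDeriv_line (f : E → ℝ) (hf : ContDiff ℝ (⊤ : ℕ∞) f) (q w : E) :
    iteratedDeriv 2 (fun lam : ℝ => f (q + lam • w)) 0
      = ((fderiv ℝ (fderiv ℝ f) q) w) w := by
  rw [show (2:ℕ) = 1 + 1 from rfl, iteratedDeriv_succ, iteratedDeriv_one]
  have hd : deriv (fun lam : ℝ => f (q + lam • w))
      = fun s : ℝ => (fderiv ℝ f (q + s • w)) w :=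
    funext fun s => (gw_hasDerivAt_line f (hf.differentiable (by simp)) q w s).deriv
  rw [hd]
  simpa using (gw_hasDerivAt_line2 f hf q w 0).deriv

end GWaux

set_option maxHeartbeats 1000000 in
/-- For a smooth `f : ℝⁿ → ℝ` and the Greene–Wu smoothing
`f̂(x) = ∫ (1/(2μ)) ∫_{−μ}^{μ} f(x + t•v) dt dσ₁(v)` (with `σ₁` the uniform probability
measure on the unit sphere), for every `p` and unit vector `u`,
`D²f̂(p)[u,u] ≥ ∫ (1/(2μ)) ∫_{−μ}^{μ} (inf over unit vectors w of D²f(p+t•v)[w,w]) dt dσ₁(v)`,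
where `D²h(q)[u,u]` is the second derivative at `0` of `λ ↦ h(q + λ•u)`. -/
theorem gw_smoothing_hessian_lower_bound
    (n : ℕ) (hn : 1 ≤ n) (μ : ℝ) (hμ : 0 < μ)
    (σ : Measure (EuclideanSpace ℝ (Fin n))) [IsProbabilityMeasure σ]
    (hσ_sphere : ∀ᵐ v ∂σ, ‖v‖ = 1)
    (hσ_rot : ∀ R : EuclideanSpace ℝ (Fin n) ≃ₗᵢ[ℝ] EuclideanSpace ℝ (Fin n),
      Measure.map R σ = σ)
    (f : EuclideanSpace ℝ (Fin n) → ℝ) (hf : ContDiff ℝ (⊤ : ℕ∞) f)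
    (fhat : EuclideanSpace ℝ (Fin n) → ℝ)
    (hfhat : ∀ x, fhat x = ∫ v, ((1 / (2 * μ)) * ∫ t in (-μ)..μ, f (x + t • v)) ∂σ)
    (p u : EuclideanSpace ℝ (Fin n)) (hu : ‖u‖ = 1) :
    iteratedDeriv 2 (fun lam : ℝ => fhat (p + lam • u)) 0
      ≥ ∫ v, ((1 / (2 * μ)) *
          ∫ t in (-μ)..μ,
            ⨅ w : Metric.sphere (0 : EuclideanSpace ℝ (Fin n)) 1,
              iteratedDeriv 2
                (fun lam : ℝ => f (p + t • v + lam • (w : EuclideanSpace ℝ (Fin n)))) 0)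
          ∂σ := by
  classical
  have hle : -μ ≤ μ := by linarith
  have hc : (0:ℝ) < 1 / (2 * μ) := by positivity
  set c : ℝ := 1 / (2 * μ) with hcdef
  set ν : Measure ℝ := volume.restrict (Ioc (-μ) μ) with hν
  haveI : IsFiniteMeasure ν := ⟨by rw [hν, Measure.restrict_apply_univ]; exact measure_Ioc_lt_top⟩
  set ρ : Measure (EuclideanSpace ℝ (Fin n) × ℝ) := σ.prod ν with hρ
  -- notation
  set H : EuclideanSpace ℝ (Fin n) → EuclideanSpace ℝ (Fin n) → ℝ :=
    fun q x => ((fderiv ℝ (fderiv ℝ f) q) x) x with hH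
  set m : EuclideanSpace ℝ (Fin n) → ℝ :=
    fun q => ⨅ w : sphere (0 : EuclideanSpace ℝ (Fin n)) 1, H q ↑w with hm
  -- continuity facts
  have hfc : Continuous f := hf.continuous
  have hf' : ContDiff ℝ (⊤ : ℕ∞) (fderiv ℝ f) := hf.fderiv_right (m := (⊤ : ℕ∞)) (by simp)
  have hf'c : Continuous (fderiv ℝ f) := hf'.continuous
  have hf''c : Continuous (fderiv ℝ (fderiv ℝ f)) := (hf'.fderiv_right (m := (⊤ : ℕ∞)) (by simp)).continuous
  have hline : ∀ lam : ℝ,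
      Continuous (fun z : EuclideanSpace ℝ (Fin n) × ℝ => p + z.2 • z.1 + lam • u) :=
    fun lam => (continuous_const.add (continuous_snd.smul continuous_fst)).add continuous_const
  -- a.e. facts on the product measure
  have hσ0 : σ {v : EuclideanSpace ℝ (Fin n) | ¬ ‖v‖ = 1} = 0 := hσ_sphere
  have haeρ : ∀ᵐ z : EuclideanSpace ℝ (Fin n) × ℝ ∂ρ, ‖z.1‖ = 1 ∧ z.2 ∈ Ioc (-μ) μ := by
    have h1 : ρ {z : EuclideanSpace ℝ (Fin n) × ℝ | ¬ ‖z.1‖ = 1} = 0 := by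
      have he : {z : EuclideanSpace ℝ (Fin n) × ℝ | ¬ ‖z.1‖ = 1}
          = {v : EuclideanSpace ℝ (Fin n) | ¬ ‖v‖ = 1} ×ˢ (univ : Set ℝ) := by
        ext z; simp [Set.mem_prod]
      rw [hρ, he, Measure.prod_prod, hσ0, zero_mul]
    have h2 : ρ {z : EuclideanSpace ℝ (Fin n) × ℝ | ¬ z.2 ∈ Ioc (-μ) μ} = 0 := by
      have he : {z : EuclideanSpace ℝ (Fin n) × ℝ | ¬ z.2 ∈ Ioc (-μ) μ}
          = (univ : Set (EuclideanSpace ℝ (Fin n))) ×ˢ {t : ℝ | t ∉ Ioc (-μ) μ} := by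
        ext z; simp [Set.mem_prod]
      have hν0 : ν {t : ℝ | t ∉ Ioc (-μ) μ} = 0 := by
        rw [hν, Measure.restrict_apply' measurableSet_Ioc]
        have he2 : {t : ℝ | t ∉ Ioc (-μ) μ} ∩ Ioc (-μ) μ = ∅ := by
          ext t; simp only [Set.mem_inter_iff, Set.mem_setOf_eq, Set.mem_empty_iff_false,
            iff_false, not_and]
          exact fun h h2 => h h2
        rw [he2]
        exact measure_empty
      rw [hρ, he, Measure.prod_prod, hν0, mul_zero]
    exact (ae_iff.2 h1).and (ae_iff.2 h2)
  -- compact ball and bounds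
  set R : ℝ := ‖p‖ + 1 + μ with hR
  have hK : IsCompact (closedBall (0 : EuclideanSpace ℝ (Fin n)) R) := isCompact_closedBall _ _
  obtain ⟨C1, hC1⟩ := hK.exists_bound_of_continuousOn hf'c.continuousOn
  obtain ⟨C2, hC2⟩ := hK.exists_bound_of_continuousOn (f := fderiv ℝ (fderiv ℝ f)) (by exact hf''c.continuousOn)
  have hmem : ∀ (lam t : ℝ) (v : EuclideanSpace ℝ (Fin n)), |lam| ≤ 1 → ‖v‖ = 1 →
      t ∈ Ioc (-μ) μ → p + t • v + lam • u ∈ closedBall (0 : EuclideanSpace ℝ (Fin n)) R := by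
    intro lam t v hlam hv ht
    have ht' : |t| ≤ μ := abs_le.2 ⟨le_of_lt ht.1, ht.2⟩
    simp only [mem_closedBall, dist_zero_right]
    have e1 : ‖p + t • v + lam • u‖ ≤ ‖p‖ + ‖t • v‖ + ‖lam • u‖ :=
      le_trans (norm_add_le _ _) (by gcongr; exact norm_add_le _ _)
    have e2 : ‖t • v‖ ≤ μ := by rw [norm_smul, hv, mul_one]; exact ht'
    have e3 : ‖lam • u‖ ≤ 1 := by rw [norm_smul, hu, mul_one]; exact hlam
    rw [hR]; linarith
  have hmem' : ∀ (t : ℝ) (v : EuclideanSpace ℝ (Fin n)), ‖v‖ = 1 → |t| ≤ μ →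
      p + t • v ∈ closedBall (0 : EuclideanSpace ℝ (Fin n)) R := by
    intro t v hv ht
    simp only [mem_closedBall, dist_zero_right]
    have e1 : ‖p + t • v‖ ≤ ‖p‖ + ‖t • v‖ := norm_add_le _ _
    have e2 : ‖t • v‖ ≤ μ := by rw [norm_smul, hv, mul_one]; exact ht
    rw [hR]; linarith
  -- generic integrability on the product
  have key_int : ∀ (G : EuclideanSpace ℝ (Fin n) → ℝ), Continuous G → ∀ lam : ℝ, |lam| ≤ 1 →
      Integrable (fun z : EuclideanSpace ℝ (Fin n) × ℝ => G (p + z.2 • z.1 + lam • u)) ρ := by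
    intro G hG lam hlam
    obtain ⟨C, hC⟩ := hK.exists_bound_of_continuousOn hG.continuousOn
    refine Integrable.mono' (integrable_const C) ((hG.comp (hline lam)).aestronglyMeasurable) ?_
    filter_upwards [haeρ] with z hz
    exact hC _ (hmem lam z.2 z.1 hlam hz.1 hz.2)
  -- first derivative under the integral
  have happ1 : ∀ lam₀ : ℝ, lam₀ ∈ ball (0:ℝ) 1 →
      HasDerivAt (fun lam => ∫ z, f (p + z.2 • z.1 + lam • u) ∂ρ)
        (∫ z, (fderiv ℝ f (p + z.2 • z.1 + lam₀ • u)) u ∂ρ) lam₀ := by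
    intro lam₀ hlam₀
    have hl₀ : |lam₀| < 1 := by simpa [Real.norm_eq_abs] using mem_ball_zero_iff.1 hlam₀
    have hε : 0 < 1 - |lam₀| := by linarith
    refine (hasDerivAt_integral_of_dominated_loc_of_deriv_le (μ := ρ) (x₀ := lam₀)
      (F := fun lam z => f (p + z.2 • z.1 + lam • u))
      (F' := fun lam z => (fderiv ℝ f (p + z.2 • z.1 + lam • u)) u)
      (bound := fun _ => C1) (ball_mem_nhds lam₀ hε)
      (Filter.Eventually.of_forall fun lam => ((hfc.comp (hline lam)).aestronglyMeasurable))
      (key_int f hfc lam₀ hl₀.le)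
      (((hf'c.comp (hline lam₀)).clm_apply continuous_const).aestronglyMeasurable)
      ?_ (integrable_const C1) ?_).2
    · filter_upwards [haeρ] with z hz lam hlam
      have h1 : |lam| ≤ 1 := by
        have := mem_ball_iff_norm.1 hlam
        have h2 := abs_sub_abs_le_abs_sub lam lam₀
        rw [Real.norm_eq_abs] at this
        linarith
      calc ‖(fderiv ℝ f (p + z.2 • z.1 + lam • u)) u‖
          ≤ ‖fderiv ℝ f (p + z.2 • z.1 + lam • u)‖ * ‖u‖ := ContinuousLinearMap.le_opNorm _ _
        _ = ‖fderiv ℝ f (p + z.2 • z.1 + lam • u)‖ := by rw [hu, mul_one]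
        _ ≤ C1 := hC1 _ (hmem lam z.2 z.1 h1 hz.1 hz.2)
    · refine Filter.Eventually.of_forall fun z lam _ => ?_
      exact gw_hasDerivAt_line f (hf.differentiable (by simp)) (p + z.2 • z.1) u lam
  -- second derivative under the integral
  have happ2 := hasDerivAt_integral_of_dominated_loc_of_deriv_le (μ := ρ) (x₀ := (0:ℝ))
      (F := fun lam z => (fderiv ℝ f (p + z.2 • z.1 + lam • u)) u)
      (F' := fun lam z => ((fderiv ℝ (fderiv ℝ f) (p + z.2 • z.1 + lam • u)) u) u)
      (bound := fun _ => C2) (ball_mem_nhds (0:ℝ) one_pos)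
      (Filter.Eventually.of_forall fun lam =>
        ((hf'c.comp (hline lam)).clm_apply continuous_const).aestronglyMeasurable)
      (key_int (fun x => (fderiv ℝ f x) u) (hf'c.clm_apply continuous_const) 0 (by norm_num))
      ((((hf''c.comp (hline 0)).clm_apply continuous_const).clm_apply
        continuous_const).aestronglyMeasurable)
      (by
        filter_upwards [haeρ] with z hz lam hlam
        have h1 : |lam| ≤ 1 := by
          have := mem_ball_zero_iff.1 hlam
          rw [Real.norm_eq_abs] at this
          linarith
        have hx := hmem lam z.2 z.1 h1 hz.1 hz.2
        calc ‖((fderiv ℝ (fderiv ℝ f) (p + z.2 • z.1 + lam • u)) u) u‖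
            ≤ ‖(fderiv ℝ (fderiv ℝ f) (p + z.2 • z.1 + lam • u)) u‖ * ‖u‖ :=
              ContinuousLinearMap.le_opNorm _ _
          _ ≤ ‖fderiv ℝ (fderiv ℝ f) (p + z.2 • z.1 + lam • u)‖ * ‖u‖ * ‖u‖ := by
              gcongr; exact ContinuousLinearMap.le_opNorm _ _
          _ = ‖fderiv ℝ (fderiv ℝ f) (p + z.2 • z.1 + lam • u)‖ := by rw [hu]; ring
          _ ≤ C2 := hC2 _ hx)
      (integrable_const C2)
      (Filter.Eventually.of_forall fun z lam _ =>
        gw_hasDerivAt_line2 f hf (p + z.2 • z.1) u lam)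
  -- the smoothed function along the line
  have hΦ : ∀ lam : ℝ, |lam| ≤ 1 →
      fhat (p + lam • u) = c * ∫ z, f (p + z.2 • z.1 + lam • u) ∂ρ := by
    intro lam hlam
    rw [hfhat]
    have h1 : (fun v : EuclideanSpace ℝ (Fin n) => c * ∫ t in (-μ)..μ, f (p + lam • u + t • v))
        = fun v => c * ∫ t, f (p + t • v + lam • u) ∂ν := by
      funext v
      rw [intervalIntegral.integral_of_le hle, ← hν]
      congr 1
      congr 1
      funext t
      rw [add_right_comm]
    rw [h1, integral_const_mul]
    congr 1
    exact integral_integral (key_int f hfc lam hlam)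
  have hgΦ : (fun lam : ℝ => fhat (p + lam • u))
      =ᶠ[nhds (0:ℝ)] (fun lam => c * ∫ z, f (p + z.2 • z.1 + lam • u) ∂ρ) := by
    filter_upwards [Metric.ball_mem_nhds (0:ℝ) one_pos] with lam hlam
    refine hΦ lam ?_
    have := mem_ball_zero_iff.1 hlam
    rw [Real.norm_eq_abs] at this
    linarith
  have hD1 : deriv (fun lam : ℝ => c * ∫ z, f (p + z.2 • z.1 + lam • u) ∂ρ)
      =ᶠ[nhds (0:ℝ)] fun lam => c * ∫ z, (fderiv ℝ f (p + z.2 • z.1 + lam • u)) u ∂ρ := by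
    filter_upwards [Metric.ball_mem_nhds (0:ℝ) one_pos] with lam hlam
    exact ((happ1 lam hlam).const_mul c).deriv
  have hL : iteratedDeriv 2 (fun lam : ℝ => fhat (p + lam • u)) 0
      = c * ∫ z, H (p + z.2 • z.1) u ∂ρ := by
    rw [show (2:ℕ) = 1 + 1 from rfl, iteratedDeriv_succ, iteratedDeriv_one]
    have e2 := (hgΦ.deriv).trans hD1
    rw [e2.deriv_eq]
    have h3 := (happ2.2.const_mul c).deriv
    rw [h3]
    simp only [hH, zero_smul, add_zero]
  -- nontriviality and the sphere
  haveI : Nontrivial (EuclideanSpace ℝ (Fin n)) := by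
    refine ⟨⟨EuclideanSpace.single ⟨0, hn⟩ (1:ℝ), 0, fun h => ?_⟩⟩
    simpa [EuclideanSpace.single_apply] using congrArg (fun x : EuclideanSpace ℝ (Fin n) => x ⟨0, hn⟩) h
  have hsne : (sphere (0 : EuclideanSpace ℝ (Fin n)) 1).Nonempty :=
    NormedSpace.sphere_nonempty.2 zero_le_one
  haveI : Nonempty ↥(sphere (0 : EuclideanSpace ℝ (Fin n)) 1) := hsne.to_subtype
  have hu_mem : u ∈ sphere (0 : EuclideanSpace ℝ (Fin n)) 1 := by
    simpa [mem_sphere_zero_iff_norm] using hu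
  -- bddBelow of the Hessian quadratic form on the sphere
  have hbdd : ∀ q : EuclideanSpace ℝ (Fin n),
      BddBelow (Set.range fun w : sphere (0 : EuclideanSpace ℝ (Fin n)) 1 => H q ↑w) := by
    intro q
    have hcont : ContinuousOn (fun x : EuclideanSpace ℝ (Fin n) => H q x)
        (sphere (0 : EuclideanSpace ℝ (Fin n)) 1) :=
      (((fderiv ℝ (fderiv ℝ f) q).continuous).clm_apply continuous_id).continuousOn
    have himg := (isCompact_sphere (0 : EuclideanSpace ℝ (Fin n)) 1).image_of_continuousOn hcont
    rw [← Set.image_eq_range]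
    exact himg.bddBelow
  -- bounds on m
  have hmub : ∀ q ∈ closedBall (0 : EuclideanSpace ℝ (Fin n)) R, |m q| ≤ C2 := by
    intro q hq
    have hub : ∀ w : sphere (0 : EuclideanSpace ℝ (Fin n)) 1, |H q ↑w| ≤ C2 := by
      intro w
      have hw : ‖(w : EuclideanSpace ℝ (Fin n))‖ = 1 := mem_sphere_zero_iff_norm.1 w.2
      calc |H q ↑w|
          = ‖((fderiv ℝ (fderiv ℝ f) q) ↑w) ↑w‖ := (Real.norm_eq_abs _).symm
        _ ≤ ‖(fderiv ℝ (fderiv ℝ f) q) ↑w‖ * ‖(w : EuclideanSpace ℝ (Fin n))‖ :=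
            ContinuousLinearMap.le_opNorm _ _
        _ ≤ ‖fderiv ℝ (fderiv ℝ f) q‖ * ‖(w : EuclideanSpace ℝ (Fin n))‖
              * ‖(w : EuclideanSpace ℝ (Fin n))‖ := by
            gcongr; exact ContinuousLinearMap.le_opNorm _ _
        _ = ‖fderiv ℝ (fderiv ℝ f) q‖ := by rw [hw]; ring
        _ ≤ C2 := hC2 q hq
    rw [abs_le]
    constructor
    · exact le_ciInf fun w => (abs_le.1 (hub w)).1
    · exact le_trans (ciInf_le (hbdd q) ⟨u, hu_mem⟩) (abs_le.1 (hub ⟨u, hu_mem⟩)).2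
  -- measurability of m via a countable dense subset
  obtain ⟨D0, hD0c, hD0d⟩ :=
    TopologicalSpace.exists_countable_dense ↥(sphere (0 : EuclideanSpace ℝ (Fin n)) 1)
  have hD0ne : D0.Nonempty := hD0d.nonempty
  haveI : Nonempty ↥D0 := hD0ne.to_subtype
  haveI : Countable ↥D0 := hD0c.to_subtype
  have hmeq : ∀ q : EuclideanSpace ℝ (Fin n), m q = ⨅ d : ↥D0, H q ↑↑d := by
    intro q
    apply le_antisymm
    · exact le_ciInf fun d => ciInf_le (hbdd q) ↑d
    · refine le_ciInf fun w => ?_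
      have hbddD : BddBelow (Set.range fun d : ↥D0 => H q ↑↑d) := by
        obtain ⟨b, hb⟩ := hbdd q
        exact ⟨b, by rintro x ⟨d, rfl⟩; exact hb ⟨↑d, rfl⟩⟩
      have hclosed : IsClosed {x : ↥(sphere (0 : EuclideanSpace ℝ (Fin n)) 1) |
          (⨅ d : ↥D0, H q ↑↑d) ≤ H q ↑x} := by
        apply isClosed_le continuous_const
        exact (((fderiv ℝ (fderiv ℝ f) q).continuous).clm_apply continuous_id).comp
          continuous_subtype_val
      have hsub : D0 ⊆ {x | (⨅ d : ↥D0, H q ↑↑d) ≤ H q ↑x} :=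
        fun d hd => ciInf_le hbddD ⟨d, hd⟩
      have hcl := hclosed.closure_subset_iff.2 hsub
      rw [hD0d.closure_eq] at hcl
      exact hcl (mem_univ w)
  have hmmeas : Measurable m := by
    rw [show m = fun q => ⨅ d : ↥D0, H q ↑↑d from funext hmeq]
    exact Measurable.iInf fun d =>
      ((hf''c.clm_apply continuous_const).clm_apply continuous_const).measurable
  -- interval integrability of m along the lines
  have hlinet : ∀ v : EuclideanSpace ℝ (Fin n),
      Continuous fun t : ℝ => p + t • v :=
    fun v => continuous_const.add (continuous_id.smul continuous_const)
  have hmii : ∀ v : EuclideanSpace ℝ (Fin n), ‖v‖ = 1 →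
      IntervalIntegrable (fun t => m (p + t • v)) volume (-μ) μ := by
    intro v hv
    rw [intervalIntegrable_iff, uIoc_of_le hle]
    refine Integrable.mono' (integrable_const C2)
      ((hmmeas.comp (hlinet v).measurable).aestronglyMeasurable) ?_
    filter_upwards [ae_restrict_mem measurableSet_Ioc] with t ht
    exact hmub _ (hmem' t v hv (abs_le.2 ⟨le_of_lt ht.1, ht.2⟩))
  -- σ-integrability of the m side
  have hmint : Integrable
      (fun v : EuclideanSpace ℝ (Fin n) => c * ∫ t in (-μ)..μ, m (p + t • v)) σ := by
    have heq : (fun v : EuclideanSpace ℝ (Fin n) => c * ∫ t in (-μ)..μ, m (p + t • v))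
        = fun v => c * ∫ t, m (p + t • v) ∂ν := by
      funext v; rw [intervalIntegral.integral_of_le hle, ← hν]
    rw [heq]
    refine Integrable.const_mul ?_ c
    have hGm : StronglyMeasurable fun z : EuclideanSpace ℝ (Fin n) × ℝ => m (p + z.2 • z.1) :=
      (hmmeas.comp (continuous_const.add (continuous_snd.smul continuous_fst)).measurable
        ).stronglyMeasurable
    refine Integrable.mono' (integrable_const (C2 * (ν univ).toReal))
      hGm.integral_prod_right'.aestronglyMeasurable ?_
    filter_upwards [hσ_sphere] with v hv
    refine norm_integral_le_of_norm_le_const ?_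
    rw [hν]
    filter_upwards [ae_restrict_mem measurableSet_Ioc] with t ht
    exact hmub _ (hmem' t v hv (abs_le.2 ⟨le_of_lt ht.1, ht.2⟩))
  -- integrability of the H-side over ρ and σ
  have hIρ : Integrable (fun z : EuclideanSpace ℝ (Fin n) × ℝ => H (p + z.2 • z.1) u) ρ := by
    have h := happ2.1
    simp only [zero_smul, add_zero] at h
    exact h
  have hHint : Integrable
      (fun v : EuclideanSpace ℝ (Fin n) => c * ∫ t in (-μ)..μ, H (p + t • v) u) σ := by
    have heq : (fun v : EuclideanSpace ℝ (Fin n) => c * ∫ t in (-μ)..μ, H (p + t • v) u)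
        = fun v => c * ∫ t, H (p + t • v) u ∂ν := by
      funext v; rw [intervalIntegral.integral_of_le hle, ← hν]
    rw [heq]
    exact (hIρ.integral_prod_left).const_mul c
  -- the middle identity
  have hmid : c * (∫ z, H (p + z.2 • z.1) u ∂ρ)
      = ∫ v, (c * ∫ t in (-μ)..μ, H (p + t • v) u) ∂σ := by
    have heq : (fun v : EuclideanSpace ℝ (Fin n) => c * ∫ t in (-μ)..μ, H (p + t • v) u)
        = fun v => c * ∫ t, H (p + t • v) u ∂ν := by
      funext v; rw [intervalIntegral.integral_of_le hle, ← hν]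
    rw [heq, integral_const_mul]
    congr 1
    exact (integral_integral (f := fun v t => H (p + t • v) u) hIρ).symm
  -- pointwise comparison
  have hptw : ∀ᵐ v ∂σ, c * ∫ t in (-μ)..μ, m (p + t • v)
      ≤ c * ∫ t in (-μ)..μ, H (p + t • v) u := by
    filter_upwards [hσ_sphere] with v hv
    have h2 : IntervalIntegrable (fun t => H (p + t • v) u) volume (-μ) μ :=
      (((hf''c.comp (hlinet v)).clm_apply continuous_const).clm_apply
        continuous_const).intervalIntegrable _ _
    have h3 : ∀ t ∈ Set.Icc (-μ) μ, m (p + t • v) ≤ H (p + t • v) u :=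
      fun t _ => ciInf_le (hbdd _) ⟨u, hu_mem⟩
    exact mul_le_mul_of_nonneg_left
      (intervalIntegral.integral_mono_on hle (hmii v hv) h2 h3) hc.le
  -- rewrite the RHS with m
  have hRw : (fun v : EuclideanSpace ℝ (Fin n) => c *
      ∫ t in (-μ)..μ, ⨅ w : Metric.sphere (0 : EuclideanSpace ℝ (Fin n)) 1,
        iteratedDeriv 2
          (fun lam : ℝ => f (p + t • v + lam • (w : EuclideanSpace ℝ (Fin n)))) 0)
      = fun v => c * ∫ t in (-μ)..μ, m (p + t • v) := by
    funext v
    congr 1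
    congr 1
    funext t
    exact iInf_congr fun w => gw_secondDeriv_line f hf (p + t • v) ↑w
  rw [ge_iff_le, hL, hRw, hmid]
  exact integral_mono_ae hmint hHint hptw
end

section
/- Let f : ℝⁿ → ℝ (n ≥ 1) be continuous, let p ∈ ℝⁿ and ε > 0, and suppose the restriction of f to the closed ball B̄(p, ε) is convex. Let κ : ℝⁿ → ℝ be a nonnegative integrable function with ∫ κ = 1 supported in the closed ball B̄(0, ε/2), and set F(x) = ∫_{ℝⁿ} f(x + u)·κ(u) du. Then for every w ∈ ℝⁿ with ‖w‖ ≤ ε/2, the midpoint convexity inequality F(p + w) + F(p − w) ≥ 2·F(p) holds. -/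
open MeasureTheory Metric Function

theorem ConvexOn.two_mul_le_add_add_sub {E : Type*} [AddCommGroup E] [Module ℝ E] {s : Set E}
    {f : E → ℝ} (hf : ConvexOn ℝ s f) {x y : E} (hadd : x + y ∈ s) (hsub : x - y ∈ s) :
    2 * f x ≤ f (x + y) + f (x - y) := by
  have h := hf.2 hadd hsub (by norm_num : (0 : ℝ) ≤ 1 / 2) (by norm_num : (0 : ℝ) ≤ 1 / 2)
    (by norm_num)
  rw [show (1 / 2 : ℝ) • (x + y) + (1 / 2 : ℝ) • (x - y) = x by module] at h
  simp only [smul_eq_mul] at h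
  linarith

theorem Continuous.integrable_mul_of_support_subset {X : Type*} [TopologicalSpace X] [T2Space X]
    [MeasurableSpace X] [OpensMeasurableSpace X] {μ : Measure X} {g κ : X → ℝ} {K : Set X}
    (hg : Continuous g) (hκ : Integrable κ μ) (hK : IsCompact K) (hsupp : support κ ⊆ K) :
    Integrable (fun u ↦ g u * κ u) μ :=
  (integrableOn_iff_integrable_of_support_subset ((support_mul_subset_right g κ).trans hsupp)).1
    (hκ.integrableOn.continuousOn_mul hg.continuousOn hK)

section Convolution

variable {E : Type*} [NormedAddCommGroup E] [ProperSpace E]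
  [MeasurableSpace E] [BorelSpace E] {μ : Measure E} {f κ : E → ℝ}

theorem integrable_comp_add_mul (hf : Continuous f) (hκ : Integrable κ μ) {δ : ℝ}
    (hsupp : support κ ⊆ closedBall 0 δ) (x : E) :
    Integrable (fun u ↦ f (x + u) * κ u) μ :=
  (hf.comp (continuous_const_add x)).integrable_mul_of_support_subset hκ
    (isCompact_closedBall 0 δ) hsupp

/-- Averaging the pointwise midpoint inequality `2 f(p + u) ≤ f(p + u + w) + f(p + u - w)`
against the nonnegative weight `κ`; every point involved lies in `closedBall p (‖w‖ + δ)`. -/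
theorem two_mul_integral_comp_add_mul_le [NormedSpace ℝ E] (hf : Continuous f) {p w : E} {δ : ℝ}
    (hconv : ConvexOn ℝ (closedBall p (‖w‖ + δ)) f) (hκ_nonneg : ∀ u, 0 ≤ κ u)
    (hκ : Integrable κ μ) (hsupp : support κ ⊆ closedBall 0 δ) :
    2 * ∫ u, f (p + u) * κ u ∂μ ≤
      ∫ u, f (p + w + u) * κ u ∂μ + ∫ u, f (p - w + u) * κ u ∂μ := by
  have hint := integrable_comp_add_mul hf hκ hsupp
  rw [← integral_add (hint _) (hint _), ← integral_const_mul]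
  refine integral_mono ((hint p).const_mul 2) ((hint _).add (hint _)) fun u ↦ ?_
  by_cases hu : κ u = 0
  · simp [hu]
  have hu_norm : ‖u‖ ≤ δ := mem_closedBall_zero_iff.1 (hsupp hu)
  have hmem : ∀ v, ‖v‖ = ‖w‖ → p + u + v ∈ closedBall p (‖w‖ + δ) := fun v hv ↦ by
    rw [mem_closedBall, dist_eq_norm, add_assoc, add_sub_cancel_left]
    linarith [norm_add_le u v]
  have hmid := hconv.two_mul_le_add_add_sub (hmem w rfl)
    (by simpa only [← sub_eq_add_neg] using hmem (-w) (norm_neg w))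
  rw [add_right_comm p w, sub_add_eq_add_sub]
  nlinarith [hκ_nonneg u]

end Convolution

theorem gw_convolution_midpoint_convexity_general
    (n : ℕ) (ε : ℝ)
    (p : EuclideanSpace ℝ (Fin n))
    (f : EuclideanSpace ℝ (Fin n) → ℝ) (hf_cont : Continuous f)
    (hf_conv : ConvexOn ℝ (Metric.closedBall p ε) f)
    (κ : EuclideanSpace ℝ (Fin n) → ℝ)
    (hκ_nonneg : ∀ u, 0 ≤ κ u)
    (hκ_int : Integrable κ)
    (hκ_supp : Function.support κ ⊆ Metric.closedBall 0 (ε / 2))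
    (F : EuclideanSpace ℝ (Fin n) → ℝ)
    (hF : ∀ x, F x = ∫ u, f (x + u) * κ u)
    (w : EuclideanSpace ℝ (Fin n)) (hw : ‖w‖ ≤ ε / 2) :
    F (p + w) + F (p - w) ≥ 2 * F p := by
  have hconv : ConvexOn ℝ (closedBall p (‖w‖ + ε / 2)) f :=
    hf_conv.subset (closedBall_subset_closedBall (by linarith)) (convex_closedBall _ _)
  simpa only [hF] using two_mul_integral_comp_add_mul_le hf_cont hconv hκ_nonneg hκ_int hκ_supp

/-- Midpoint convexity of the convolution: if `f` is continuous and convex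
on the closed ball `B̄(p, ε)`, and `κ` is a nonnegative probability kernel supported in
`B̄(0, ε/2)`, then `F(x) = ∫ f(x + u)·κ(u) du` satisfies `F(p + w) + F(p − w) ≥ 2·F(p)` for
every `w` with `‖w‖ ≤ ε/2`. -/
theorem gw_convolution_midpoint_convexity
    (n : ℕ) (hn : 1 ≤ n) (ε : ℝ) (hε : 0 < ε)
    (p : EuclideanSpace ℝ (Fin n))
    (f : EuclideanSpace ℝ (Fin n) → ℝ) (hf_cont : Continuous f)
    (hf_conv : ConvexOn ℝ (Metric.closedBall p ε) f)
    (κ : EuclideanSpace ℝ (Fin n) → ℝ)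
    (hκ_nonneg : ∀ u, 0 ≤ κ u)
    (hκ_int : Integrable κ)
    (hκ_mass : ∫ u, κ u = 1)
    (hκ_supp : Function.support κ ⊆ Metric.closedBall 0 (ε / 2))
    (F : EuclideanSpace ℝ (Fin n) → ℝ)
    (hF : ∀ x, F x = ∫ u, f (x + u) * κ u)
    (w : EuclideanSpace ℝ (Fin n)) (hw : ‖w‖ ≤ ε / 2) :
    F (p + w) + F (p - w) ≥ 2 * F p :=
  gw_convolution_midpoint_convexity_general n ε p f hf_cont hf_conv κ hκ_nonneg hκ_int hκ_supp F hF
    w hw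
end
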